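/- arXiv:2101.09973 — 3 statements merged into one kernel-verified Lean document; each statement's English description precedes it below -/
import Mathlib

section
/- For every n-tiled histogram distribution P on [0,1], there exists a continuous piecewise affine function f: [0,1] → [0,1] with at most n−1 breakpoints in (0,1) such that the pushforward of the uniform distribution on [0,1] under f equals P, i.e. f#U = P. -/
open MeasureTheory Set ENNReal

noncomputable section

/-- The uniform probability distribution on `[0,1]`. -/
def Uniform01 : Measure ℝ := volume.restrict (Set.Icc 0 1)

/-- `f` restricted to `[0,1]` is continuous piecewise affine with at most `m` breakpoints
in `(0,1)`: there is a monotone subdivision `0 = t_0 ≤ t_1 ≤ ⋯ ≤ t_{m+1} = 1` of `[0,1]`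
such that `f` is affine on each piece `[t_i, t_{i+1}]`. -/
def PiecewiseAffineOn (f : ℝ → ℝ) (m : ℕ) : Prop :=
  ∃ t : Fin (m + 2) → ℝ, Monotone t ∧ t 0 = 0 ∧ t (Fin.last (m + 1)) = 1 ∧
    ∀ i : Fin (m + 1), ∃ a b : ℝ,
      ∀ x ∈ Set.Icc (t i.castSucc) (t i.succ), f x = a * x + b

/-- `μ` is an `n`-tiled histogram distribution on `[0,1]`, i.e. `μ ∈ E[0,1]ₙ`. -/
def IsHist1 (n : ℕ) (μ : Measure ℝ) : Prop :=
  ∃ w : Fin n → ℝ, (∀ k, 0 < w k) ∧ (∑ k, w k = (n : ℝ)) ∧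
    μ = volume.withDensity fun x =>
      ∑ k : Fin n, Set.indicator (Set.Icc ((k : ℝ) / n) (((k : ℝ) + 1) / n))
        (fun _ => ENNReal.ofReal (w k)) x

namespace HistAux

variable (n : ℕ) (w : Fin n → ℝ)

/-- `w` padded by zero to a function on `ℕ`. -/
def wpad (m : ℕ) : ℝ := if h : m < n then w ⟨m, h⟩ else 0

/-- partial sums `(w 0 + ⋯ + w (j-1)) / n`, the subdivision points. -/
def pts (j : ℕ) : ℝ := (∑ k ∈ Finset.range j, wpad n w k) / n

/-- The candidate map: CDF-inverse of the histogram. -/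
def fmap (x : ℝ) : ℝ :=
  ∑ k : Fin n, max 0 (min x (pts n w ((k : ℕ) + 1)) - pts n w (k : ℕ)) / w k

variable {n w}

lemma wpad_fin (k : Fin n) : wpad n w (k : ℕ) = w k := by
  simp [wpad, k.2]

section

variable (hw : ∀ k, 0 < w k)
include hw

lemma wpad_nonneg (m : ℕ) : 0 ≤ wpad n w m := by
  unfold wpad; split
  · exact (hw _).le
  · exact le_rfl

omit hw in
lemma pts_zero : pts n w 0 = 0 := by simp [pts]

omit hw in
lemma pts_succ (j : ℕ) : pts n w (j + 1) = pts n w j + wpad n w j / n := by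
  unfold pts
  rw [Finset.sum_range_succ, add_div]

lemma pts_mono : Monotone (pts n w) := by
  apply monotone_nat_of_le_succ
  intro j
  rw [pts_succ]
  have : (0:ℝ) ≤ wpad n w j / n :=
    div_nonneg (wpad_nonneg hw j) (Nat.cast_nonneg n)
  linarith

lemma pts_nonneg (j : ℕ) : 0 ≤ pts n w j := by
  have := pts_mono hw (Nat.zero_le j)
  rwa [pts_zero] at this

variable (hsum : ∑ k, w k = (n : ℝ)) (hn : 1 ≤ n)
include hsum hn

omit hw in
lemma pts_last : pts n w n = 1 := by
  have hn0 : (n : ℝ) ≠ 0 := Nat.cast_ne_zero.2 (by omega)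
  unfold pts
  rw [← Fin.sum_univ_eq_sum_range (fun m => wpad n w m)]
  rw [Finset.sum_congr rfl fun k _ => wpad_fin k, hsum, div_self hn0]

lemma pts_le_one {j : ℕ} (hj : j ≤ n) : pts n w j ≤ 1 := by
  have := pts_mono hw hj
  rwa [pts_last hsum hn] at this

/-- Key computation: on the `i`-th piece, `fmap` is affine. -/
lemma fmap_piece (i : Fin n) {x : ℝ} (hx1 : pts n w (i : ℕ) ≤ x)
    (hx2 : x ≤ pts n w ((i : ℕ) + 1)) :
    fmap n w x = (i : ℝ) / n + (x - pts n w (i : ℕ)) / w i := by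
  set c := (x - pts n w (i : ℕ)) / w i with hc
  have hterm : ∀ k : Fin n,
      max 0 (min x (pts n w ((k : ℕ) + 1)) - pts n w (k : ℕ)) / w k =
      if (k : ℕ) < (i : ℕ) then (1:ℝ)/n else if (k : ℕ) = (i : ℕ) then c else 0 := by
    intro k
    rcases lt_trichotomy (k : ℕ) (i : ℕ) with h | h | h
    · rw [if_pos h]
      have h1 : pts n w ((k : ℕ) + 1) ≤ x :=
        le_trans (pts_mono hw (by omega)) hx1
      rw [min_eq_right h1, pts_succ]
      have h2 : pts n w (k:ℕ) + w k / n - pts n w (k:ℕ) = w k / n := by ring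
      rw [wpad_fin, h2, max_eq_right (div_nonneg (hw k).le (Nat.cast_nonneg n))]
      have hk0 : w k ≠ 0 := (hw k).ne'
      field_simp
    · have hk : k = i := Fin.ext h
      subst hk
      rw [if_neg (lt_irrefl _), if_pos rfl, hc,
        min_eq_left hx2, max_eq_right (sub_nonneg.2 hx1)]
    · rw [if_neg (by omega : ¬ (k:ℕ) < (i:ℕ)), if_neg (by omega : ¬ (k:ℕ) = (i:ℕ))]
      have hx3 : x ≤ pts n w (k : ℕ) := le_trans hx2 (pts_mono hw (by omega))
      have hx4 : x ≤ pts n w ((k : ℕ) + 1) := le_trans hx3 (pts_mono hw (by omega))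
      rw [min_eq_left hx4, max_eq_left (sub_nonpos.2 hx3), zero_div]
  have hsum1 : fmap n w x =
      ∑ m ∈ Finset.range n, (if m < (i : ℕ) then (1:ℝ)/n else if m = (i : ℕ) then c else 0) := by
    rw [fmap, Finset.sum_congr rfl fun k _ => hterm k]
    exact Fin.sum_univ_eq_sum_range
      (fun m => if m < (i : ℕ) then (1:ℝ)/n else if m = (i : ℕ) then c else 0) n
  have hin : (i : ℕ) ≤ n := i.2.le
  rw [hsum1, Finset.range_eq_Ico,
    ← Finset.sum_Ico_consecutive _ (Nat.zero_le (i : ℕ)) hin]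
  have hA : (∑ m ∈ Finset.Ico 0 (i : ℕ), if m < (i : ℕ) then (1:ℝ)/n
      else if m = (i : ℕ) then c else 0) = (i : ℝ) / n := by
    rw [Finset.sum_congr rfl fun m hm => if_pos (Finset.mem_Ico.1 hm).2]
    rw [Finset.sum_const, Nat.card_Ico, Nat.sub_zero, nsmul_eq_mul, mul_one_div]
  have hB : (∑ m ∈ Finset.Ico (i : ℕ) n, if m < (i : ℕ) then (1:ℝ)/n
      else if m = (i : ℕ) then c else 0) = c := by
    rw [Finset.sum_eq_single_of_mem (i : ℕ) (Finset.mem_Ico.2 ⟨le_rfl, i.2⟩)]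
    · rw [if_neg (lt_irrefl _), if_pos rfl]
    · intro b hb hne
      rw [if_neg (Nat.not_lt.2 (Finset.mem_Ico.1 hb).1), if_neg hne]
  rw [hA, hB]

lemma fmap_pts {j : ℕ} (hj : j ≤ n) : fmap n w (pts n w j) = (j : ℝ) / n := by
  rcases Nat.eq_zero_or_pos j with rfl | hj0
  · have h := fmap_piece hw hsum hn (⟨0, by omega⟩ : Fin n) le_rfl
      (pts_mono hw (Nat.le_succ 0))
    simpa using h
  · obtain ⟨i, rfl⟩ := Nat.exists_eq_succ_of_ne_zero (by omega : j ≠ 0)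
    have hi : i < n := by omega
    have h := fmap_piece hw hsum hn (⟨i, hi⟩ : Fin n)
      (pts_mono hw (Nat.le_succ i)) le_rfl
    simp only at h
    rw [h, pts_succ]
    have : pts n w i + wpad n w i / n - pts n w i = wpad n w i / n := by ring
    rw [this]
    have hwk : wpad n w i = w ⟨i, hi⟩ := wpad_fin ⟨i, hi⟩
    have hw0 : w (⟨i, hi⟩ : Fin n) ≠ 0 := (hw _).ne'
    rw [hwk]
    push_cast
    field_simp

end

lemma fmap_mono (hw : ∀ k, 0 < w k) : Monotone (fmap n w) := by
  intro x y hxy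
  apply Finset.sum_le_sum
  intro k _
  have hwk := hw k
  gcongr

lemma fmap_continuous : Continuous (fmap n w) := by
  apply continuous_finset_sum
  intro k _
  exact (continuous_const.max ((continuous_id.min continuous_const).sub
    continuous_const)).div_const _

/-- locating a point within a monotone subdivision -/
lemma exists_piece {u : ℕ → ℝ} (hu : Monotone u) :
    ∀ {n : ℕ} {x : ℝ}, u 0 ≤ x → x < u n → ∃ i, i < n ∧ u i ≤ x ∧ x < u (i + 1) := by
  intro n
  induction n with
  | zero => intro x h0 h1; exact absurd h1 (not_lt.2 h0)
  | succ m ih =>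
    intro x h0 h1
    by_cases hx : x < u m
    · obtain ⟨i, hi, h2, h3⟩ := ih h0 hx
      exact ⟨i, by omega, h2, h3⟩
    · exact ⟨m, by omega, not_lt.1 hx, h1⟩

section

variable (hw : ∀ k, 0 < w k) (hsum : ∑ k, w k = (n : ℝ)) (hn : 1 ≤ n)
include hw hsum hn

lemma fmap_strictMonoOn : StrictMonoOn (fmap n w) (Icc 0 1) := by
  intro x hx y hy hxy
  obtain ⟨i, hi, h1, h2⟩ := exists_piece (pts_mono hw) (n := n) (x := x)
    (by rw [pts_zero]; exact hx.1)
    (by rw [pts_last hsum hn]; exact lt_of_lt_of_le hxy hy.2)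
  set y' := min y (pts n w (i + 1)) with hy'
  have hxy' : x < y' := lt_min hxy h2
  have hy'le : y' ≤ pts n w (i + 1) := min_le_right _ _
  have hxlow : pts n w i ≤ x := h1
  have hy'low : pts n w i ≤ y' := le_of_lt (lt_of_le_of_lt hxlow hxy')
  have hfx := fmap_piece hw hsum hn (⟨i, hi⟩ : Fin n) (x := x) hxlow h2.le
  have hfy := fmap_piece hw hsum hn (⟨i, hi⟩ : Fin n) (x := y') hy'low hy'le
  have hlt : fmap n w x < fmap n w y' := by
    rw [hfx, hfy]
    have := (hw (⟨i, hi⟩ : Fin n))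
    gcongr
  exact lt_of_lt_of_le hlt (fmap_mono hw (min_le_left _ _))

lemma fmap_zero : fmap n w 0 = 0 := by
  have h := fmap_pts hw hsum hn (Nat.zero_le n)
  rw [pts_zero] at h
  simpa using h

lemma fmap_one : fmap n w 1 = 1 := by
  have h := fmap_pts hw hsum hn (le_refl n)
  rw [pts_last hsum hn] at h
  rw [h, div_self (Nat.cast_ne_zero.2 (by omega : n ≠ 0))]

lemma fmap_mapsTo : Set.MapsTo (fmap n w) (Icc 0 1) (Icc 0 1) := by
  intro x hx
  constructor
  · have := fmap_mono hw hx.1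
    rwa [fmap_zero hw hsum hn] at this
  · have := fmap_mono hw hx.2
    rwa [fmap_one hw hsum hn] at this

end

section

variable (hw : ∀ k, 0 < w k) (hsum : ∑ k, w k = (n : ℝ)) (hn : 1 ≤ n)
include hw hsum hn

lemma preimage_Iic_neg {a : ℝ} (ha : a < 0) :
    fmap n w ⁻¹' Iic a ∩ Icc 0 1 = (∅ : Set ℝ) := by
  ext x
  simp only [mem_inter_iff, mem_preimage, mem_Iic, mem_empty_iff_false, iff_false, not_and]
  intro hfa hx
  have h0 := (fmap_mapsTo hw hsum hn hx).1
  linarith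

lemma preimage_Iic_ge_one {a : ℝ} (ha : 1 ≤ a) :
    fmap n w ⁻¹' Iic a ∩ Icc 0 1 = Icc 0 1 := by
  apply Set.inter_eq_right.2
  intro x hx
  exact le_trans (fmap_mapsTo hw hsum hn hx).2 ha

lemma preimage_Iic_mid {a : ℝ} (ha : 0 ≤ a) {i : ℕ} (hi : i < n)
    (h1 : (i : ℝ) / n ≤ a) (h2 : a < ((i : ℝ) + 1) / n) :
    fmap n w ⁻¹' Iic a ∩ Icc 0 1 =
      Icc 0 (pts n w i + w ⟨i, hi⟩ * (a - (i : ℝ) / n)) := by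
  have hnR : (0 : ℝ) < n := Nat.cast_pos.2 (by omega)
  have hwi := hw ⟨i, hi⟩
  set c := pts n w i + w ⟨i, hi⟩ * (a - (i : ℝ) / n) with hcdef
  have hge : 0 ≤ w ⟨i, hi⟩ * (a - (i : ℝ) / n) :=
    mul_nonneg hwi.le (sub_nonneg.2 h1)
  have hc1 : pts n w i ≤ c := by rw [hcdef]; linarith
  have hps : pts n w (i + 1) = pts n w i + w ⟨i, hi⟩ / n := by
    rw [pts_succ, wpad_fin ⟨i, hi⟩]
  have h4 : a - (i : ℝ) / n ≤ 1 / n := by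
    have h5 : (i : ℝ) / n + 1 / n = ((i : ℝ) + 1) / n := by ring
    linarith
  have hc2 : c ≤ pts n w (i + 1) := by
    rw [hps, hcdef]
    have h6 := mul_le_mul_of_nonneg_left h4 hwi.le
    have h7 : w ⟨i, hi⟩ * (1 / n) = w ⟨i, hi⟩ / n := by ring
    linarith
  have hc0 : 0 ≤ c := le_trans (pts_nonneg hw i) hc1
  have hcle1 : c ≤ 1 := le_trans hc2 (pts_le_one hw hsum hn (by omega))
  have hfc : fmap n w c = a := by
    have hpc := fmap_piece hw hsum hn (⟨i, hi⟩ : Fin n) (x := c) hc1 hc2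
    simp only at hpc
    rw [hpc, hcdef]
    have h3 : pts n w i + w ⟨i, hi⟩ * (a - (i : ℝ) / n) - pts n w i
        = w ⟨i, hi⟩ * (a - (i : ℝ) / n) := by ring
    rw [h3, mul_div_cancel_left₀ _ hwi.ne']
    ring
  ext x
  simp only [mem_inter_iff, mem_preimage, mem_Iic, mem_Icc]
  constructor
  · rintro ⟨hfa, hx0, hx1⟩
    refine ⟨hx0, ?_⟩
    by_contra hcx
    push_neg at hcx
    have := fmap_strictMonoOn hw hsum hn ⟨hc0, hcle1⟩ ⟨hx0, hx1⟩ hcx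
    rw [hfc] at this
    linarith
  · rintro ⟨hx0, hxc⟩
    have hx1 : x ≤ 1 := le_trans hxc hcle1
    refine ⟨?_, hx0, hx1⟩
    have := fmap_mono hw hxc
    rwa [hfc] at this

end

end HistAux

open HistAux in
theorem hist1_pushforward_of_uniform (n : ℕ) (hn : 1 ≤ n) (P : Measure ℝ) (hP : IsHist1 n P) :
    ∃ f : ℝ → ℝ, PiecewiseAffineOn f (n - 1) ∧
      Set.MapsTo f (Set.Icc 0 1) (Set.Icc 0 1) ∧ Measure.map f Uniform01 = P := by
  obtain ⟨w, hw, hsum, hPeq⟩ := hP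
  have hnR : (0 : ℝ) < n := Nat.cast_pos.2 (by omega)
  have hmeas : Measurable (fmap n w) := fmap_continuous.measurable
  refine ⟨fmap n w, ?_, fmap_mapsTo hw hsum hn, ?_⟩
  · -- piecewise affine
    refine ⟨fun j => pts n w (j : ℕ), ?_, ?_, ?_, ?_⟩
    · intro j₁ j₂ h
      exact pts_mono hw (by exact_mod_cast h)
    · exact pts_zero
    · show pts n w ((Fin.last (n - 1 + 1)).val) = 1
      rw [Fin.val_last, (by omega : n - 1 + 1 = n), pts_last hsum hn]
    · intro i
      have hi : (i : ℕ) < n := by have := i.2; omega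
      refine ⟨(w ⟨i, hi⟩)⁻¹, ((i : ℕ) : ℝ) / n - pts n w (i : ℕ) / w ⟨i, hi⟩, ?_⟩
      intro x hx
      have hx1 : pts n w (i : ℕ) ≤ x := by simpa using hx.1
      have hx2 : x ≤ pts n w ((i : ℕ) + 1) := by simpa using hx.2
      have := fmap_piece hw hsum hn (⟨(i : ℕ), hi⟩ : Fin n) hx1 hx2
      simp only at this
      rw [this]
      ring
  · -- measure equality
    haveI hU : IsFiniteMeasure (Measure.map (fmap n w) Uniform01) := by
      constructor
      rw [Measure.map_apply hmeas MeasurableSet.univ, Set.preimage_univ, Uniform01,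
        Measure.restrict_apply_univ, Real.volume_Icc]
      exact ofReal_lt_top
    have hRHS : ∀ A : Set ℝ, MeasurableSet A → P A =
        ∑ k : Fin n, ENNReal.ofReal (w k) *
          volume (Icc ((k : ℝ) / n) (((k : ℝ) + 1) / n) ∩ A) := by
      intro A hA
      rw [hPeq, withDensity_apply _ hA, lintegral_finset_sum]
      · refine Finset.sum_congr rfl fun k _ => ?_
        rw [lintegral_indicator measurableSet_Icc, setLIntegral_const,
          Measure.restrict_apply measurableSet_Icc]
      · intro k _
        exact measurable_const.indicator measurableSet_Icc
    refine Measure.ext_of_Iic _ P fun a => ?_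
    rw [Measure.map_apply hmeas measurableSet_Iic, Uniform01,
      Measure.restrict_apply (hmeas measurableSet_Iic), hRHS _ measurableSet_Iic]
    rcases lt_or_ge a 0 with ha | ha
    · rw [preimage_Iic_neg hw hsum hn ha, measure_empty]
      symm
      apply Finset.sum_eq_zero
      intro k _
      have he : Icc ((k : ℝ) / n) (((k : ℝ) + 1) / n) ∩ Iic a = ∅ := by
        ext x
        simp only [mem_inter_iff, mem_Icc, mem_Iic, mem_empty_iff_false, iff_false, not_and]
        rintro ⟨hx1, _⟩ hx2
        have : (0 : ℝ) ≤ (k : ℝ) / n := div_nonneg (Nat.cast_nonneg _) hnR.le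
        linarith
      rw [he, measure_empty, mul_zero]
    rcases lt_or_ge a 1 with ha1 | ha1
    · -- 0 ≤ a < 1
      obtain ⟨i, hi, h1, h2⟩ := exists_piece (u := fun j : ℕ => (j : ℝ) / n)
        (fun j₁ j₂ h => by dsimp only; gcongr <;> exact_mod_cast h) (n := n) (x := a)
        (by simpa using ha) (by show a < (n : ℝ) / n; rwa [div_self hnR.ne'])
      push_cast at h1 h2
      rw [preimage_Iic_mid hw hsum hn ha hi h1 h2, Real.volume_Icc, sub_zero]
      have hterm : ∀ k : Fin n,
          ENNReal.ofReal (w k) * volume (Icc ((k : ℝ) / n) (((k : ℝ) + 1) / n) ∩ Iic a) =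
          if (k : ℕ) < i then ENNReal.ofReal (wpad n w (k : ℕ) / n)
          else if (k : ℕ) = i then ENNReal.ofReal (w ⟨i, hi⟩ * (a - (i : ℝ) / n))
          else 0 := by
        intro k
        rcases lt_trichotomy (k : ℕ) i with h | h | h
        · rw [if_pos h]
          have hsub : Icc ((k : ℝ) / n) (((k : ℝ) + 1) / n) ⊆ Iic a := by
            intro x hx
            have hkle : ((k : ℝ) + 1) / n ≤ (i : ℝ) / n := by
              gcongr
              exact_mod_cast Nat.cast_le.2 (by omega : (k : ℕ) + 1 ≤ i)
            exact le_trans hx.2 (le_trans hkle h1)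
          rw [Set.inter_eq_left.2 hsub, Real.volume_Icc,
            (by ring : ((k : ℝ) + 1) / n - (k : ℝ) / n = 1 / n),
            ← ENNReal.ofReal_mul (hw k).le, wpad_fin, mul_one_div]
        · rw [if_neg (by omega), if_pos h]
          have hk : k = (⟨i, hi⟩ : Fin n) := Fin.ext h
          subst hk
          have hic : Icc ((i : ℝ) / n) (((i : ℝ) + 1) / n) ∩ Iic a = Icc ((i : ℝ) / n) a := by
            ext x
            simp only [mem_inter_iff, mem_Icc, mem_Iic]
            constructor
            · rintro ⟨⟨u, v⟩, t⟩; exact ⟨u, t⟩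
            · rintro ⟨u, t⟩; exact ⟨⟨u, le_trans t h2.le⟩, t⟩
          rw [hic, Real.volume_Icc, ← ENNReal.ofReal_mul (hw _).le]
        · rw [if_neg (by omega), if_neg (by omega)]
          have he : Icc ((k : ℝ) / n) (((k : ℝ) + 1) / n) ∩ Iic a = ∅ := by
            ext x
            simp only [mem_inter_iff, mem_Icc, mem_Iic, mem_empty_iff_false, iff_false, not_and]
            rintro ⟨hx1, _⟩ hx2
            have hkk : ((i : ℝ) + 1) / n ≤ (k : ℝ) / n := by
              gcongr
              exact_mod_cast Nat.cast_le.2 (by omega : i + 1 ≤ (k : ℕ))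
            linarith
          rw [he, measure_empty, mul_zero]
      rw [Finset.sum_congr rfl fun k _ => hterm k]
      have hrange : (∑ k : Fin n,
          if (k : ℕ) < i then ENNReal.ofReal (wpad n w (k : ℕ) / n)
          else if (k : ℕ) = i then ENNReal.ofReal (w ⟨i, hi⟩ * (a - (i : ℝ) / n)) else 0)
          = ∑ m ∈ Finset.range n,
          (if m < i then ENNReal.ofReal (wpad n w m / n)
          else if m = i then ENNReal.ofReal (w ⟨i, hi⟩ * (a - (i : ℝ) / n)) else 0) :=
        Fin.sum_univ_eq_sum_range (fun m => if m < i then ENNReal.ofReal (wpad n w m / n)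
          else if m = i then ENNReal.ofReal (w ⟨i, hi⟩ * (a - (i : ℝ) / n)) else 0) n
      rw [hrange, Finset.range_eq_Ico,
        ← Finset.sum_Ico_consecutive _ (Nat.zero_le i) hi.le]
      have hA : (∑ m ∈ Finset.Ico 0 i,
          if m < i then ENNReal.ofReal (wpad n w m / n)
          else if m = i then ENNReal.ofReal (w ⟨i, hi⟩ * (a - (i : ℝ) / n)) else 0)
          = ENNReal.ofReal (pts n w i) := by
        rw [Finset.sum_congr rfl fun m hm => if_pos (Finset.mem_Ico.1 hm).2]
        rw [← ENNReal.ofReal_sum_of_nonneg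
          (fun m _ => div_nonneg (wpad_nonneg hw m) hnR.le)]
        congr 1
        rw [pts, Finset.sum_div, Finset.range_eq_Ico]
      have hB : (∑ m ∈ Finset.Ico i n,
          if m < i then ENNReal.ofReal (wpad n w m / n)
          else if m = i then ENNReal.ofReal (w ⟨i, hi⟩ * (a - (i : ℝ) / n)) else 0)
          = ENNReal.ofReal (w ⟨i, hi⟩ * (a - (i : ℝ) / n)) := by
        rw [Finset.sum_eq_single_of_mem i (Finset.mem_Ico.2 ⟨le_rfl, hi⟩)]
        · rw [if_neg (lt_irrefl _), if_pos rfl]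
        · intro b hb hne
          rw [if_neg (Nat.not_lt.2 (Finset.mem_Ico.1 hb).1), if_neg hne]
      rw [hA, hB, ← ENNReal.ofReal_add (pts_nonneg hw i)
        (mul_nonneg (hw _).le (sub_nonneg.2 h1))]
    · -- 1 ≤ a
      rw [preimage_Iic_ge_one hw hsum hn ha1, Real.volume_Icc, sub_zero]
      have hterm : ∀ k : Fin n,
          ENNReal.ofReal (w k) * volume (Icc ((k : ℝ) / n) (((k : ℝ) + 1) / n) ∩ Iic a) =
          ENNReal.ofReal (wpad n w (k : ℕ) / n) := by
        intro k
        have hsub : Icc ((k : ℝ) / n) (((k : ℝ) + 1) / n) ⊆ Iic a := by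
          intro x hx
          have hkle : ((k : ℝ) + 1) / n ≤ 1 := by
            rw [div_le_one hnR]
            exact_mod_cast Nat.cast_le.2 (by omega : (k : ℕ) + 1 ≤ n)
          exact le_trans hx.2 (le_trans hkle ha1)
        rw [Set.inter_eq_left.2 hsub, Real.volume_Icc,
          (by ring : ((k : ℝ) + 1) / n - (k : ℝ) / n = 1 / n),
          ← ENNReal.ofReal_mul (hw k).le, wpad_fin, mul_one_div]
      rw [Finset.sum_congr rfl fun k _ => hterm k]
      have hrange : (∑ k : Fin n, ENNReal.ofReal (wpad n w (k : ℕ) / n))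
          = ∑ m ∈ Finset.range n, ENNReal.ofReal (wpad n w m / n) :=
        Fin.sum_univ_eq_sum_range (fun m => ENNReal.ofReal (wpad n w m / n)) n
      rw [hrange, ← ENNReal.ofReal_sum_of_nonneg
        (fun m _ => div_nonneg (wpad_nonneg hw m) hnR.le)]
      congr 1
      have : (∑ m ∈ Finset.range n, wpad n w m / n) = pts n w n := by
        rw [pts, Finset.sum_div]
      rw [this, pts_last hsum hn]
end
end

section
/- Let P ∈ E[0,1]²ₙ, let φ_marg ∈ Σ_{n−1} satisfy φ_marg#U = P_marg (the marginal of P along the first coordinate), and for 0 ≤ i ≤ n−1 let φ_i ∈ Σ_{n−1} satisfy φ_i#U = P_i (the n-tiled histogram on [0,1] that is the marginal of P along the second coordinate conditioned on the first coordinate lying in [i/n,(i+1)/n]). Then for every s ∈ ℕ, the map φ: [0,1] → [0,1]² defined by φ(x) = (φ_marg(x), Σ_{i=0}^{n−1} φ_i(g_s(n·φ_marg(x) − i))) satisfies W(P, φ#U) ≤ 2√2/(n·2^s). -/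
open MeasureTheory Set ENNReal

noncomputable section

/-- `π` is a coupling of `μ` and `ν`. -/
def IsCoupling {E : Type*} [MeasurableSpace E] (μ ν : Measure E) (π : Measure (E × E)) : Prop :=
  π.map Prod.fst = μ ∧ π.map Prod.snd = ν

/-- The Wasserstein distance `W(μ,ν) = inf over couplings π of ∫ ‖x - y‖ dπ(x,y)`. -/
def wass {E : Type*} [MeasurableSpace E] [PseudoEMetricSpace E] (μ ν : Measure E) : ℝ≥0∞ :=
  ⨅ (π : Measure (E × E)) (_ : IsCoupling μ ν π), ∫⁻ p, edist p.1 p.2 ∂π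

/-- The triangular function `g(x) = 2x` on `[0,1/2]`, `g(x) = 2 - 2x` on `[1/2,1]`. -/
def g : ℝ → ℝ := fun x => if x ≤ 1 / 2 then 2 * x else 2 - 2 * x

/-- The `n`-tiled histogram measure on `[0,1]` with weights `w`. -/
def hist1M (n : ℕ) (w : Fin n → ℝ) : Measure ℝ :=
  volume.withDensity fun x =>
    ∑ k : Fin n, Set.indicator (Set.Icc ((k : ℝ) / n) (((k : ℝ) + 1) / n))
      (fun _ => ENNReal.ofReal (w k)) x

/-- The tile `c_k = [k₁/n,(k₁+1)/n] × [k₂/n,(k₂+1)/n]` in `[0,1]²`. -/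
def tile2 (n : ℕ) (k1 k2 : Fin n) : Set (EuclideanSpace ℝ (Fin 2)) :=
  {x | x 0 ∈ Set.Icc ((k1 : ℝ) / n) (((k1 : ℝ) + 1) / n) ∧
       x 1 ∈ Set.Icc ((k2 : ℝ) / n) (((k2 : ℝ) + 1) / n)}

/-- The `n`-tiled histogram measure on `[0,1]²` with weights `w`. -/
def hist2M (n : ℕ) (w : Fin n → Fin n → ℝ) : Measure (EuclideanSpace ℝ (Fin 2)) :=
  volume.withDensity fun x =>
    ∑ k1 : Fin n, ∑ k2 : Fin n,
      Set.indicator (tile2 n k1 k2) (fun _ => ENNReal.ofReal (w k1 k2)) x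

/-!
Couple `P` with `φ#U` through an auxiliary uniform variable `v`. Write
`φ x = (φ_marg x, H (φ_marg x))`, draw `y ~ P_marg` and put `Y = (y, H y)` and
`X = ((⌊N y⌋ + v) / N, H y)` with `N = n 2^s`: `X` moves `y` to a uniform point of its cell of
the grid of mesh `1/N`. Then `Y ~ φ#U` and `‖X - Y‖ ≤ 1/N`.
To see `X ~ P`, write `y = (i + t)/n` on the `i`-th column; there `H y = φ_i (g_s t)`, and `X` is
the image of `(t, v)` under `(t, v) ↦ ((⌊2^s t⌋ + v) / 2^s, g_s t)` followed by the affine column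
map. That map preserves the uniform measure on the square, because `g_s` maps every dyadic cell
of level `s` affinely onto `[0,1]`. Hence, on the `i`-th column, the first coordinate of `X` is
uniform and independent of the second one, whose law is `φ_i#U = P_i`.
-/

namespace TentCoupling

instance : IsProbabilityMeasure Uniform01 :=
  ⟨by simp [Uniform01]⟩

lemma ae_mem_Ioo_uniform01 : ∀ᵐ x ∂Uniform01, x ∈ Ioo (0 : ℝ) 1 := by
  rw [Uniform01, Measure.restrict_congr_set Ioo_ae_eq_Icc.symm]
  exact ae_restrict_mem measurableSet_Ioo

lemma measurePreserving_one_sub : MeasurePreserving (fun v : ℝ => 1 - v) Uniform01 Uniform01 := by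
  have h := (Measure.measurePreserving_sub_left volume (1 : ℝ)).restrict_preimage
    (measurableSet_Icc (a := (0 : ℝ)) (b := 1))
  rwa [preimage_const_sub_Icc, sub_self, sub_zero] at h

def cellMap (M k : ℕ) (x : ℝ) : ℝ := (k + x) / M

def cell (M k : ℕ) : Set ℝ := Icc ((k : ℝ) / M) (((k : ℝ) + 1) / M)

lemma measurableSet_cell (M k : ℕ) : MeasurableSet (cell M k) := measurableSet_Icc

lemma measurable_cellMap (M k : ℕ) : Measurable (cellMap M k) := by
  unfold cellMap; fun_prop

lemma cellMap_preimage_cell {M : ℕ} (hM : 0 < M) (k : ℕ) :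
    cellMap M k ⁻¹' cell M k = Icc 0 1 := by
  have hM' : (0 : ℝ) < M := by exact_mod_cast hM
  ext x
  simp only [cell, cellMap, mem_preimage, mem_Icc, div_le_div_iff_of_pos_right hM']
  constructor <;> rintro ⟨h1, h2⟩ <;> constructor <;> linarith

lemma map_cellMap_volume {M : ℕ} (hM : 0 < M) (k : ℕ) :
    volume.map (cellMap M k) = (M : ℝ≥0∞) • volume := by
  have hcomp : cellMap M k = (fun x => x * (M : ℝ)⁻¹) ∘ (fun x => (k : ℝ) + x) := by
    ext x; simp [cellMap, div_eq_mul_inv]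
  rw [hcomp, ← Measure.map_map (by fun_prop) (by fun_prop), map_add_left_eq_self,
    Real.map_volume_mul_right (by positivity), inv_inv, abs_of_nonneg (Nat.cast_nonneg M),
    ENNReal.ofReal_natCast]

lemma map_cellMap_uniform01 {M : ℕ} (hM : 0 < M) (k : ℕ) :
    Uniform01.map (cellMap M k) = (M : ℝ≥0∞) • volume.restrict (cell M k) := by
  rw [Uniform01, ← cellMap_preimage_cell hM k,
    ← Measure.restrict_map (measurable_cellMap M k) (measurableSet_cell M k),
    map_cellMap_volume hM, Measure.restrict_smul]

lemma prod_restrict_cell {M : ℕ} (hM : 0 < M) (k : ℕ) {α : Type*} [MeasurableSpace α]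
    (ν : Measure α) [SFinite ν] :
    (volume.restrict (cell M k)).prod ν
      = (M : ℝ≥0∞)⁻¹ • (Uniform01.prod ν).map (Prod.map (cellMap M k) id) := by
  rw [← Measure.map_prod_map _ _ (measurable_cellMap M k) measurable_id, Measure.map_id,
    map_cellMap_uniform01 hM, Measure.prod_smul_left, smul_smul,
    ENNReal.inv_mul_cancel (by exact_mod_cast hM.ne') (ENNReal.natCast_ne_top M), one_smul]

lemma restrict_Icc_eq_sum_of_monotone {α : Type*} [LinearOrder α] [TopologicalSpace α]
    [OrderClosedTopology α] [MeasurableSpace α] [OpensMeasurableSpace α]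
    (μ : Measure α) [NullSingletonClass μ] {u : ℕ → α} (hu : Monotone u) (K : ℕ) :
    μ.restrict (Icc (u 0) (u K)) = ∑ l ∈ Finset.range K, μ.restrict (Icc (u l) (u (l + 1))) := by
  induction K with
  | zero => simp
  | succ K ih =>
    have hdisj : AEDisjoint μ (Icc (u 0) (u K)) (Icc (u K) (u (K + 1))) :=
      measure_mono_null (fun x ⟨⟨_, h1⟩, h2, _⟩ => le_antisymm h1 h2) (measure_singleton _)
    rw [← Icc_union_Icc_eq_Icc (hu K.zero_le) (hu K.le_succ),
      Measure.restrict_union₀ hdisj measurableSet_Icc.nullMeasurableSet, ih,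
      Finset.sum_range_succ]

lemma uniform01_eq_sum_restrict_cell {M : ℕ} (hM : 0 < M) :
    Uniform01 = ∑ l ∈ Finset.range M, volume.restrict (cell M l) := by
  have hM' : (M : ℝ) ≠ 0 := by exact_mod_cast hM.ne'
  have hmono : Monotone fun l : ℕ => (l : ℝ) / M := fun a b hab => by
    dsimp only; gcongr
  have h := restrict_Icc_eq_sum_of_monotone volume hmono M
  simp only [CharP.cast_eq_zero, zero_div, div_self hM', Nat.cast_add, Nat.cast_one] at h
  exact h

lemma prod_finset_sum_left {ι α β : Type*} [MeasurableSpace α] [MeasurableSpace β]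
    (s : Finset ι) (μ : ι → Measure α) (ν : Measure β) [SFinite ν] :
    (∑ i ∈ s, μ i).prod ν = ∑ i ∈ s, (μ i).prod ν := by
  rw [← Measure.sum_coe_finset, Measure.prod_sum_left]
  exact Measure.sum_coe_finset s fun i => (μ i).prod ν

lemma prod_finset_sum_right {ι α β : Type*} [MeasurableSpace α] [MeasurableSpace β]
    (s : Finset ι) (μ : Measure α) (ν : ι → Measure β) [∀ i, SFinite (ν i)] :
    μ.prod (∑ i ∈ s, ν i) = ∑ i ∈ s, μ.prod (ν i) := by
  rw [← Measure.sum_coe_finset, Measure.prod_sum_right]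
  exact Measure.sum_coe_finset s fun i => μ.prod (ν i)

lemma measurable_g : Measurable g :=
  Measurable.ite measurableSet_Iic (measurable_const.mul measurable_id)
    (measurable_const.sub (measurable_const.mul measurable_id))

lemma g_of_le_half {x : ℝ} (hx : x ≤ 1 / 2) : g x = 2 * x := if_pos hx

lemma g_of_half_le {x : ℝ} (hx : 1 / 2 ≤ x) : g x = 2 - 2 * x := by
  unfold g; split_ifs <;> linarith

lemma g_iterate_cellMap {s l : ℕ} (hl : l < 2 ^ s) {v : ℝ} (hv : v ∈ Icc (0 : ℝ) 1) :
    g^[s] (cellMap (2 ^ s) l v) = if Even l then v else 1 - v := by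
  induction s generalizing l v with
  | zero =>
    obtain rfl : l = 0 := by simpa using hl
    simp [cellMap]
  | succ s ih =>
    obtain ⟨hv0, hv1⟩ := hv
    rw [Function.iterate_succ_apply]
    rcases lt_or_ge l (2 ^ s) with hlow | hhigh
    · have hl1 : (l : ℝ) + 1 ≤ 2 ^ s := by exact_mod_cast hlow
      have hg : g (cellMap (2 ^ (s + 1)) l v) = cellMap (2 ^ s) l v := by
        rw [g_of_le_half]
        · simp only [cellMap]; push_cast; field_simp; ring
        · simp only [cellMap]; push_cast; rw [div_le_iff₀ (by positivity), pow_succ]; linarith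
      rw [hg, ih hlow ⟨hv0, hv1⟩]
    · -- `g` folds the upper half of `[0,1]` back: cell `l` of level `s + 1` lands on cell `l'`.
      set l' := 2 ^ (s + 1) - 1 - l with hl'
      have hl'lt : l' < 2 ^ s := by rw [pow_succ] at hl hl'; omega
      have hcast : (l' : ℝ) = 2 ^ (s + 1) - 1 - l := by
        rw [hl', Nat.cast_sub (by omega), Nat.cast_sub Nat.one_le_two_pow]; push_cast; ring
      have hpar : Even l' ↔ ¬ Even l := by
        rw [hl', Nat.even_sub (by omega), Nat.even_sub Nat.one_le_two_pow]
        simp [Nat.even_pow]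
      have hl2 : (2 : ℝ) ^ s ≤ l := by exact_mod_cast hhigh
      have hg : g (cellMap (2 ^ (s + 1)) l v) = cellMap (2 ^ s) l' (1 - v) := by
        rw [g_of_half_le]
        · simp only [cellMap]; rw [hcast]; push_cast; field_simp; ring
        · simp only [cellMap]; push_cast; rw [le_div_iff₀ (by positivity), pow_succ]; linarith
      rw [hg, ih hl'lt ⟨by linarith, by linarith⟩]
      by_cases he : Even l <;> simp [he, hpar]

lemma measurePreserving_ite_even (l : ℕ) :
    MeasurePreserving (fun v : ℝ => if Even l then v else 1 - v) Uniform01 Uniform01 := by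
  by_cases hl : Even l
  · simp only [hl, if_true]; exact MeasurePreserving.id Uniform01
  · simp only [hl, if_false]; exact measurePreserving_one_sub

def resample (N : ℕ) (y v : ℝ) : ℝ := (⌊(N : ℝ) * y⌋ + v) / N

lemma measurable_resample (N : ℕ) : Measurable fun p : ℝ × ℝ => resample N p.1 p.2 :=
  ((measurable_from_top.comp ((measurable_const.mul measurable_fst).floor)).add
    measurable_snd).div_const _

lemma resample_mul_cellMap {n M : ℕ} (hn : 0 < n) (hM : 0 < M) (i : ℕ) (t v : ℝ) :
    resample (n * M) (cellMap n i t) v = cellMap n i (resample M t v) := by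
  have hn' : (n : ℝ) ≠ 0 := by exact_mod_cast hn.ne'
  have hM' : (M : ℝ) ≠ 0 := by exact_mod_cast hM.ne'
  have hfloor : ⌊((n * M : ℕ) : ℝ) * cellMap n i t⌋ = (M * i : ℕ) + ⌊(M : ℝ) * t⌋ := by
    rw [← Int.floor_natCast_add]
    congr 1
    simp only [cellMap]; push_cast; field_simp
  rw [resample, hfloor]
  simp only [resample, cellMap]
  push_cast
  field_simp
  ring

lemma resample_one {t : ℝ} (ht : t ∈ Ico (0 : ℝ) 1) (v : ℝ) : resample 1 t v = v := by
  simp [resample, Int.floor_eq_zero_iff.mpr ht]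

lemma abs_resample_sub_le {N : ℕ} (hN : 0 < N) (y : ℝ) {v : ℝ} (hv : v ∈ Icc (0 : ℝ) 1) :
    |resample N y v - y| ≤ 1 / N := by
  have hN' : (0 : ℝ) < N := by exact_mod_cast hN
  have hlo := Int.floor_le ((N : ℝ) * y)
  have hhi := Int.lt_floor_add_one ((N : ℝ) * y)
  have hdiff : resample N y v - y = (⌊(N : ℝ) * y⌋ - N * y + v) / N := by
    rw [resample]; field_simp; ring
  rw [hdiff, abs_div, abs_of_pos hN', div_le_div_iff_of_pos_right hN', abs_le]
  constructor <;> linarith [hv.1, hv.2]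

def dyadicTent (s : ℕ) (p : ℝ × ℝ) : ℝ × ℝ := (resample (2 ^ s) p.1 p.2, g^[s] p.1)

lemma measurable_dyadicTent (s : ℕ) : Measurable (dyadicTent s) :=
  (measurable_resample _).prodMk ((measurable_g.iterate s).comp measurable_fst)

/-- After the change of variables `t ↦ cellMap (2 ^ s) l t`, the map `dyadicTent s` becomes
`(t, v) ↦ (cellMap (2 ^ s) l v, t or 1 - t)`: it swaps two independent uniform coordinates. -/
lemma map_dyadicTent_prod_restrict_cell {s l : ℕ} (hl : l < 2 ^ s) :
    ((volume.restrict (cell (2 ^ s) l)).prod Uniform01).map (dyadicTent s)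
      = (volume.restrict (cell (2 ^ s) l)).prod Uniform01 := by
  have hM : 0 < 2 ^ s := Nat.two_pow_pos s
  set ρ := fun v : ℝ => if Even l then v else 1 - v
  have hρ : MeasurePreserving ρ Uniform01 Uniform01 := measurePreserving_ite_even l
  have hswap : dyadicTent s ∘ Prod.map (cellMap (2 ^ s) l) id
      =ᵐ[Uniform01.prod Uniform01] Prod.map (cellMap (2 ^ s) l) ρ ∘ Prod.swap := by
    filter_upwards [Measure.quasiMeasurePreserving_fst.ae ae_mem_Ioo_uniform01] with p hp
    have hcell := resample_mul_cellMap hM one_pos l p.1 p.2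
    rw [mul_one, resample_one (Ioo_subset_Ico_self hp)] at hcell
    simp only [Function.comp_apply, Prod.map_fst, Prod.map_snd, id, dyadicTent, hcell,
      g_iterate_cellMap hl (Ioo_subset_Icc_self hp), ρ]
    rfl
  conv_lhs => rw [prod_restrict_cell hM]
  rw [Measure.map_smul, Measure.map_map (measurable_dyadicTent s)
      ((measurable_cellMap _ _).prodMap measurable_id), Measure.map_congr hswap,
    ← Measure.map_map ((measurable_cellMap _ _).prodMap hρ.measurable) measurable_swap,
    Measure.prod_swap, ← Measure.map_prod_map _ _ (measurable_cellMap _ _) hρ.measurable,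
    hρ.map_eq, map_cellMap_uniform01 hM, Measure.prod_smul_left, smul_smul,
    ENNReal.inv_mul_cancel (by exact_mod_cast hM.ne') (ENNReal.natCast_ne_top _), one_smul]

lemma measurePreserving_dyadicTent (s : ℕ) :
    MeasurePreserving (dyadicTent s) (Uniform01.prod Uniform01) (Uniform01.prod Uniform01) := by
  refine ⟨measurable_dyadicTent s, ?_⟩
  have hsplit : Uniform01.prod Uniform01
      = ∑ l ∈ Finset.range (2 ^ s), (volume.restrict (cell (2 ^ s) l)).prod Uniform01 := by
    conv_lhs => arg 1; rw [uniform01_eq_sum_restrict_cell (Nat.two_pow_pos s)]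
    exact prod_finset_sum_left _ _ _
  rw [hsplit, Measure.map_finset_sum (measurable_dyadicTent s).aemeasurable]
  exact Finset.sum_congr rfl fun l hl =>
    map_dyadicTent_prod_restrict_cell (Finset.mem_range.mp hl)

lemma measurePreserving_g_iterate (s : ℕ) : MeasurePreserving g^[s] Uniform01 Uniform01 := by
  refine ⟨measurable_g.iterate s, ?_⟩
  calc Uniform01.map g^[s] = ((Uniform01.prod Uniform01).map Prod.fst).map g^[s] := by
        rw [measurePreserving_fst.map_eq]
    _ = (Uniform01.prod Uniform01).map (Prod.snd ∘ dyadicTent s) :=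
        Measure.map_map (measurable_g.iterate s) measurable_fst
    _ = Uniform01 := (measurePreserving_snd.comp (measurePreserving_dyadicTent s)).map_eq

lemma map_resample_prod_restrict_cell {n : ℕ} (hn : 0 < n) (s i : ℕ) {H f : ℝ → ℝ}
    (hH : Measurable H) (hf : Measurable f)
    (hHf : ∀ t ∈ Ioo (0 : ℝ) 1, H (cellMap n i t) = f (g^[s] t)) :
    ((volume.restrict (cell n i)).prod Uniform01).map
        (fun p => (resample (n * 2 ^ s) p.1 p.2, H p.1))
      = (volume.restrict (cell n i)).prod (Uniform01.map f) := by
  have hΨ : Measurable fun p : ℝ × ℝ => (resample (n * 2 ^ s) p.1 p.2, H p.1) :=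
    (measurable_resample _).prodMk (hH.comp measurable_fst)
  have hfactor : (fun p : ℝ × ℝ => (resample (n * 2 ^ s) p.1 p.2, H p.1)) ∘
        Prod.map (cellMap n i) id
      =ᵐ[Uniform01.prod Uniform01] Prod.map (cellMap n i) f ∘ dyadicTent s := by
    filter_upwards [Measure.quasiMeasurePreserving_fst.ae ae_mem_Ioo_uniform01] with p hp
    simp only [Function.comp_apply, Prod.map_fst, Prod.map_snd, id, dyadicTent,
      resample_mul_cellMap hn (Nat.two_pow_pos s), hHf p.1 hp]
    rfl
  conv_lhs => rw [prod_restrict_cell hn]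
  rw [Measure.map_smul, Measure.map_map hΨ ((measurable_cellMap _ _).prodMap measurable_id),
    Measure.map_congr hfactor,
    ← Measure.map_map ((measurable_cellMap _ _).prodMap hf) (measurable_dyadicTent s),
    (measurePreserving_dyadicTent s).map_eq,
    ← Measure.map_prod_map _ _ (measurable_cellMap _ _) hf, map_cellMap_uniform01 hn,
    Measure.prod_smul_left, smul_smul,
    ENNReal.inv_mul_cancel (by exact_mod_cast hn.ne') (ENNReal.natCast_ne_top _), one_smul]

lemma withDensity_sum_indicator_const {α ι : Type*} [MeasurableSpace α] (μ : Measure α)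
    (s : Finset ι) {A : ι → Set α} (hA : ∀ i, MeasurableSet (A i)) (c : ι → ℝ≥0∞) :
    μ.withDensity (fun x => ∑ i ∈ s, (A i).indicator (fun _ => c i) x)
      = ∑ i ∈ s, c i • μ.restrict (A i) := by
  classical
  induction s using Finset.induction_on with
  | empty => simp
  | insert a s ha ih =>
    simp only [Finset.sum_insert ha]
    rw [← ih, ← withDensity_const, ← withDensity_indicator (hA a),
      ← withDensity_add_left (measurable_const.indicator (hA a))]
    rfl

lemma hist1M_eq_sum (n : ℕ) (W : Fin n → ℝ) :
    hist1M n W = ∑ k : Fin n, ENNReal.ofReal (W k) • volume.restrict (cell n k) :=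
  withDensity_sum_indicator_const volume Finset.univ (A := fun k : Fin n => cell n k)
    (fun k => measurableSet_cell n k) (fun k => ENNReal.ofReal (W k))

lemma hist1M_ne_zero {n : ℕ} {W : Fin n → ℝ} {k : Fin n} (hk : 0 < W k) : hist1M n W ≠ 0 := by
  have hn : (0 : ℝ) < n := by exact_mod_cast k.pos
  rw [hist1M_eq_sum]
  intro h
  have hk' := (Finset.sum_eq_zero_iff_of_nonneg fun _ _ => Measure.zero_le _).mp h k
    (Finset.mem_univ k)
  rw [Measure.ennreal_smul_eq_zero, ENNReal.ofReal_eq_zero, Measure.restrict_eq_zero, cell,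
    Real.volume_Icc, ENNReal.ofReal_eq_zero, ← sub_div, add_sub_cancel_left, one_div,
    inv_nonpos] at hk'
  rcases hk' with h1 | h1 <;> linarith

def euclideanOfProd : ℝ × ℝ ≃ᵐ EuclideanSpace ℝ (Fin 2) :=
  MeasurableEquiv.finTwoArrow.symm.trans (MeasurableEquiv.toLp 2 (Fin 2 → ℝ))

lemma measurePreserving_euclideanOfProd : MeasurePreserving euclideanOfProd :=
  (PiLp.volume_preserving_toLp (Fin 2)).comp (volume_preserving_finTwoArrow ℝ).symm

lemma edist_euclideanOfProd_of_snd_eq (a b c : ℝ) :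
    edist (euclideanOfProd (a, c)) (euclideanOfProd (b, c)) = edist a b := by
  rw [edist_dist, edist_dist, EuclideanSpace.dist_eq, Fin.sum_univ_two]
  simp [euclideanOfProd, Real.sqrt_sq_eq_abs, Real.dist_eq]

lemma hist2M_eq_map (n : ℕ) (w : Fin n → Fin n → ℝ) :
    hist2M n w = (∑ i, ∑ k, ENNReal.ofReal (w i k) •
      (volume.restrict (cell n i)).prod (volume.restrict (cell n k))).map euclideanOfProd := by
  have hmeas (p : Fin n × Fin n) : MeasurableSet (tile2 n p.1 p.2) :=
    euclideanOfProd.symm.measurable ((measurableSet_cell n _).prod (measurableSet_cell n _))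
  have hrestrict (i k : Fin n) : volume.restrict (tile2 n i k)
      = (volume.restrict (cell n i ×ˢ cell n k)).map euclideanOfProd :=
    (measurePreserving_euclideanOfProd.restrict_preimage (hmeas (i, k))).map_eq.symm
  rw [hist2M]
  simp_rw [← Fintype.sum_prod_type']
  rw [withDensity_sum_indicator_const volume Finset.univ
      (A := fun p : Fin n × Fin n => tile2 n p.1 p.2) hmeas (fun p => ENNReal.ofReal (w p.1 p.2)),
    Measure.map_finset_sum euclideanOfProd.measurable.aemeasurable]
  refine Finset.sum_congr rfl fun p _ => ?_
  rw [Measure.map_smul, hrestrict, Measure.volume_eq_prod, Measure.prod_restrict]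

lemma hist2M_eq_map_sum_prod_hist1M {n : ℕ} {w : Fin n → Fin n → ℝ} (hw : ∀ i k, 0 < w i k) :
    hist2M n w = (∑ i, ENNReal.ofReal ((∑ j, w i j) / n) • (volume.restrict (cell n i)).prod
      (hist1M n fun k => (n : ℝ) * w i k / ∑ j, w i j)).map euclideanOfProd := by
  rw [hist2M_eq_map]
  congr 1
  refine Finset.sum_congr rfl fun i _ => ?_
  have hrow : 0 < ∑ j, w i j := Finset.sum_pos (fun j _ => hw i j) ⟨i, Finset.mem_univ _⟩
  have hn : (0 : ℝ) < n := by exact_mod_cast i.pos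
  rw [hist1M_eq_sum, prod_finset_sum_right, Finset.smul_sum]
  refine Finset.sum_congr rfl fun k _ => ?_
  rw [Measure.prod_smul_right, smul_smul, ← ENNReal.ofReal_mul (by positivity)]
  congr 2
  field_simp

def tentSum (n s : ℕ) (f : Fin n → ℝ → ℝ) (y : ℝ) : ℝ :=
  ∑ i : Fin n, (Icc (0 : ℝ) 1).indicator (fun z => f i (g^[s] z)) (n * y - i)

lemma measurable_tentSum {n : ℕ} (s : ℕ) {f : Fin n → ℝ → ℝ} (hf : ∀ i, Measurable (f i)) :
    Measurable (tentSum n s f) :=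
  Finset.measurable_sum _ fun i _ => (((hf i).comp (measurable_g.iterate s)).indicator
    measurableSet_Icc).comp ((measurable_const.mul measurable_id).sub measurable_const)

lemma tentSum_cellMap {n : ℕ} (s : ℕ) (f : Fin n → ℝ → ℝ) (i : Fin n) {t : ℝ}
    (ht : t ∈ Ioo (0 : ℝ) 1) : tentSum n s f (cellMap n i t) = f i (g^[s] t) := by
  have hn : (n : ℝ) ≠ 0 := by exact_mod_cast i.pos.ne'
  have hshift (j : Fin n) : (n : ℝ) * cellMap n i t - j = t + ((i : ℤ) - (j : ℤ) : ℤ) := by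
    simp only [cellMap]; push_cast; field_simp; ring
  rw [tentSum, Finset.sum_eq_single i]
  · rw [hshift, sub_self, Int.cast_zero, add_zero, indicator_of_mem (Ioo_subset_Icc_self ht)]
  · intro j _ hji
    have hij : (i : ℤ) - j ≠ 0 := sub_ne_zero.mpr (by exact_mod_cast Fin.val_ne_of_ne hji.symm)
    rw [hshift, indicator_of_notMem]
    rintro ⟨h0, h1⟩
    obtain ⟨ht0, ht1⟩ := ht
    rcases lt_or_gt_of_ne hij with h | h
    · have : ((i : ℤ) - j : ℤ) ≤ (-1 : ℝ) := by exact_mod_cast Int.le_sub_one_of_lt h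
      linarith
    · have : (1 : ℝ) ≤ ((i : ℤ) - j : ℤ) := by exact_mod_cast h
      linarith
  · simp

lemma tentSum_ae_eq {n : ℕ} (hn : 0 < n) (s : ℕ) {f f' : Fin n → ℝ → ℝ}
    (h : ∀ i, f i =ᵐ[Uniform01] f' i) : tentSum n s f =ᵐ[volume] tentSum n s f' := by
  have hn' : (n : ℝ) ≠ 0 := by exact_mod_cast hn.ne'
  have hterm (i : Fin n) :
      (fun y : ℝ => (Icc (0 : ℝ) 1).indicator (fun z => f i (g^[s] z)) (n * y - i))
        =ᵐ[volume] fun y => (Icc (0 : ℝ) 1).indicator (fun z => f' i (g^[s] z)) (n * y - i) := by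
    have hcomp : (fun z => f i (g^[s] z)) =ᵐ[volume.restrict (Icc 0 1)] fun z => f' i (g^[s] z) :=
      (measurePreserving_g_iterate s).quasiMeasurePreserving.ae_eq_comp (h i)
    have hqmp : Measure.QuasiMeasurePreserving (fun y : ℝ => n * y - i) volume volume :=
      (measurePreserving_sub_right volume (i : ℝ)).quasiMeasurePreserving.comp
        (Measure.quasiMeasurePreserving_smul volume hn')
    exact hqmp.ae_eq_comp ((ae_eq_restrict_iff_indicator_ae_eq measurableSet_Icc).mp hcomp)
  filter_upwards [ae_all_iff.mpr hterm] with y hy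
  exact Finset.sum_congr rfl fun i _ => hy i

lemma map_comp_tentSum {n : ℕ} (hn : 0 < n) (s : ℕ) {φ : ℝ → ℝ}
    (hφ : AEMeasurable φ Uniform01) (hac : Uniform01.map φ ≪ volume) {f f' : Fin n → ℝ → ℝ}
    (hf' : ∀ i, Measurable (f' i)) (hff' : ∀ i, f i =ᵐ[Uniform01] f' i) :
    Uniform01.map (fun x => euclideanOfProd (φ x, tentSum n s f (φ x)))
      = (Uniform01.map φ).map fun y => euclideanOfProd (y, tentSum n s f' y) := by
  have hG : Measurable fun y => euclideanOfProd (y, tentSum n s f' y) :=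
    euclideanOfProd.measurable.comp (measurable_id.prodMk (measurable_tentSum s hf'))
  have hH : tentSum n s f =ᵐ[Uniform01.map φ] tentSum n s f' :=
    hac.ae_le (tentSum_ae_eq hn s hff')
  have hae : (fun y => euclideanOfProd (y, tentSum n s f y))
      =ᵐ[Uniform01.map φ] fun y => euclideanOfProd (y, tentSum n s f' y) :=
    hH.mono fun y hy => by simp only [hy]
  rw [← Measure.map_congr hae,
    AEMeasurable.map_map_of_aemeasurable (hG.aemeasurable.congr hae.symm) hφ]
  rfl

lemma map_resample_tentSum {n : ℕ} (hn : 0 < n) (s : ℕ) (W : Fin n → ℝ) {f : Fin n → ℝ → ℝ}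
    (hf : ∀ i, Measurable (f i)) :
    ((hist1M n W).prod Uniform01).map
        (fun p => (resample (n * 2 ^ s) p.1 p.2, tentSum n s f p.1))
      = ∑ i, ENNReal.ofReal (W i) • (volume.restrict (cell n i)).prod (Uniform01.map (f i)) := by
  have hΨ : Measurable fun p : ℝ × ℝ => (resample (n * 2 ^ s) p.1 p.2, tentSum n s f p.1) :=
    (measurable_resample _).prodMk ((measurable_tentSum s hf).comp measurable_fst)
  rw [hist1M_eq_sum, prod_finset_sum_left, Measure.map_finset_sum hΨ.aemeasurable]
  refine Finset.sum_congr rfl fun i _ => ?_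
  rw [Measure.prod_smul_left, Measure.map_smul, map_resample_prod_restrict_cell hn s i
    (measurable_tentSum s hf) (hf i) fun t ht => tentSum_cellMap s f i ht]

lemma wass_map_le {Ω E : Type*} [MeasurableSpace Ω] [MeasurableSpace E] [PseudoEMetricSpace E]
    (μ : Measure Ω) {X Y : Ω → E} (hX : Measurable X) (hY : Measurable Y) :
    wass (μ.map X) (μ.map Y) ≤ ∫⁻ ω, edist (X ω) (Y ω) ∂μ := by
  have hXY : Measurable fun ω => (X ω, Y ω) := hX.prodMk hY
  refine iInf₂_le_of_le (μ.map fun ω => (X ω, Y ω)) ⟨?_, ?_⟩ (lintegral_map_le _ _)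
  · exact Measure.map_map measurable_fst hXY
  · exact Measure.map_map measurable_snd hXY

lemma lintegral_edist_resample_le (μ : Measure ℝ) [IsProbabilityMeasure μ] {N : ℕ} (hN : 0 < N)
    (H : ℝ → ℝ) :
    ∫⁻ p, edist (euclideanOfProd (resample N p.1 p.2, H p.1)) (euclideanOfProd (p.1, H p.1))
      ∂(μ.prod Uniform01) ≤ ENNReal.ofReal (1 / N) := by
  have hv : ∀ᵐ p ∂(μ.prod Uniform01), p.2 ∈ Icc (0 : ℝ) 1 :=
    Measure.quasiMeasurePreserving_snd.ae (ae_restrict_mem measurableSet_Icc)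
  calc _ ≤ ∫⁻ _, ENNReal.ofReal (1 / N) ∂(μ.prod Uniform01) := by
        refine lintegral_mono_ae (hv.mono fun p hp => ?_)
        rw [edist_euclideanOfProd_of_snd_eq, edist_dist, Real.dist_eq]
        exact ENNReal.ofReal_le_ofReal (abs_resample_sub_le hN p.1 hp)
    _ = ENNReal.ofReal (1 / N) := by simp

lemma wass_hist2M_map_tentSum_le {n : ℕ} (hn : 0 < n) (s : ℕ) {w : Fin n → Fin n → ℝ}
    (hw : ∀ i k, 0 < w i k) [IsProbabilityMeasure (hist1M n fun k => (∑ j, w k j) / n)]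
    {f : Fin n → ℝ → ℝ} (hf : ∀ i, Measurable (f i))
    (hlaw : ∀ i, Uniform01.map (f i) = hist1M n fun k => (n : ℝ) * w i k / ∑ j, w i j) :
    wass (hist2M n w) ((hist1M n fun k => (∑ j, w k j) / n).map
        fun y => euclideanOfProd (y, tentSum n s f y))
      ≤ ENNReal.ofReal (1 / (n * 2 ^ s : ℕ)) := by
  set μ := hist1M n fun k => (∑ j, w k j) / n
  have hΨ : Measurable fun p : ℝ × ℝ => (resample (n * 2 ^ s) p.1 p.2, tentSum n s f p.1) :=
    (measurable_resample _).prodMk ((measurable_tentSum s hf).comp measurable_fst)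
  have hG : Measurable fun y => euclideanOfProd (y, tentSum n s f y) :=
    euclideanOfProd.measurable.comp (measurable_id.prodMk (measurable_tentSum s hf))
  have hX : hist2M n w = (μ.prod Uniform01).map
      (euclideanOfProd ∘ fun p => (resample (n * 2 ^ s) p.1 p.2, tentSum n s f p.1)) := by
    rw [hist2M_eq_map_sum_prod_hist1M hw, ← Measure.map_map euclideanOfProd.measurable hΨ,
      map_resample_tentSum hn s _ hf]
    simp_rw [hlaw]
  have hY : μ.map (fun y => euclideanOfProd (y, tentSum n s f y))
      = (μ.prod Uniform01).map ((fun y => euclideanOfProd (y, tentSum n s f y)) ∘ Prod.fst) := by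
    rw [← Measure.map_map hG measurable_fst, Measure.map_fst_prod, measure_univ, one_smul]
  rw [hX, hY]
  exact (wass_map_le _ (euclideanOfProd.measurable.comp hΨ) (hG.comp measurable_fst)).trans
    (lintegral_edist_resample_le μ (Nat.mul_pos hn (Nat.two_pow_pos s)) _)

end TentCoupling

open TentCoupling

theorem wasserstein_bound_of_construction_general
    (n : ℕ) (hn : 1 ≤ n) (w : Fin n → Fin n → ℝ)
    (hw : ∀ k1 k2, 0 < w k1 k2)
    -- φ_marg ∈ Σ_{n-1} with φ_marg # U = P_marg :
    (φmarg : ℝ → ℝ)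
    (hmarg : Measure.map φmarg Uniform01 = hist1M n fun k => (∑ j, w k j) / n)
    -- φ_i ∈ Σ_{n-1} with φ_i # U = P_i :
    (φc : Fin n → ℝ → ℝ)
    (hcond : ∀ i, Measure.map (φc i) Uniform01
      = hist1M n fun k => (n : ℝ) * w i k / ∑ j, w i j)
    (s : ℕ) :
    wass (hist2M n w)
      (Uniform01.map fun x : ℝ =>
        (WithLp.toLp 2 (![φmarg x,
            ∑ i : Fin n, Set.indicator (Set.Icc 0 1) (fun y => φc i (g^[s] y))
              ((n : ℝ) * φmarg x - (i : ℝ))] : Fin 2 → ℝ) : EuclideanSpace ℝ (Fin 2))) ≤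
      ENNReal.ofReal (2 * Real.sqrt 2 / ((n : ℝ) * 2 ^ s)) := by
  have hrow (i : Fin n) : 0 < ∑ j, w i j :=
    Finset.sum_pos (fun j _ => hw i j) ⟨i, Finset.mem_univ _⟩
  -- `Measure.map` along a map that is not a.e.-measurable is `0`.
  have hφm : AEMeasurable φmarg Uniform01 := .of_map_ne_zero <| by
    rw [hmarg]; exact hist1M_ne_zero (k := ⟨0, hn⟩) (by have := hrow ⟨0, hn⟩; positivity)
  have hφc (i : Fin n) : AEMeasurable (φc i) Uniform01 := .of_map_ne_zero <| by
    rw [hcond]; exact hist1M_ne_zero (k := i) (by have := hw i i; have := hrow i; positivity)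
  have : IsProbabilityMeasure (hist1M n fun k => (∑ j, w k j) / n) :=
    hmarg ▸ Measure.isProbabilityMeasure_map hφm
  calc _ = wass (hist2M n w) ((hist1M n fun k => (∑ j, w k j) / n).map
          fun y => euclideanOfProd (y, tentSum n s (fun i => (hφc i).mk) y)) := by
        rw [← hmarg, ← map_comp_tentSum hn s hφm (hmarg ▸ withDensity_absolutelyContinuous _ _)
          (fun i => (hφc i).measurable_mk) fun i => (hφc i).ae_eq_mk]
        rfl
    _ ≤ ENNReal.ofReal (1 / (n * 2 ^ s : ℕ)) :=
        wass_hist2M_map_tentSum_le hn s hw (fun i => (hφc i).measurable_mk)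
          fun i => (Measure.map_congr (hφc i).ae_eq_mk).symm.trans (hcond i)
    _ ≤ _ := by
        apply ENNReal.ofReal_le_ofReal
        push_cast
        gcongr
        nlinarith [Real.one_lt_sqrt_two]

theorem wasserstein_bound_of_construction
    (n : ℕ) (hn : 1 ≤ n) (w : Fin n → Fin n → ℝ)
    (hw : ∀ k1 k2, 0 < w k1 k2) (hsum : ∑ k1, ∑ k2, w k1 k2 = (n : ℝ) ^ 2)
    -- φ_marg ∈ Σ_{n-1} with φ_marg # U = P_marg :
    (φmarg : ℝ → ℝ) (hφm : PiecewiseAffineOn φmarg (n - 1))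
    (hφm' : Set.MapsTo φmarg (Set.Icc 0 1) (Set.Icc 0 1))
    (hmarg : Measure.map φmarg Uniform01 = hist1M n fun k => (∑ j, w k j) / n)
    -- φ_i ∈ Σ_{n-1} with φ_i # U = P_i :
    (φc : Fin n → ℝ → ℝ) (hφc : ∀ i, PiecewiseAffineOn (φc i) (n - 1))
    (hφc' : ∀ i, Set.MapsTo (φc i) (Set.Icc 0 1) (Set.Icc 0 1))
    (hcond : ∀ i, Measure.map (φc i) Uniform01
      = hist1M n fun k => (n : ℝ) * w i k / ∑ j, w i j)
    (s : ℕ) :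
    wass (hist2M n w)
      (Uniform01.map fun x : ℝ =>
        (WithLp.toLp 2 (![φmarg x,
            ∑ i : Fin n, Set.indicator (Set.Icc 0 1) (fun y => φc i (g^[s] y))
              ((n : ℝ) * φmarg x - (i : ℝ))] : Fin 2 → ℝ) : EuclideanSpace ℝ (Fin 2))) ≤
      ENNReal.ofReal (2 * Real.sqrt 2 / ((n : ℝ) * 2 ^ s)) :=
  wasserstein_bound_of_construction_general n hn w hw φmarg hmarg φc hcond s
end
end

section
/- (Compose Lemma) Let f, g: ℝ → ℝ be realized by ReLU networks with f ∈ N(N₁,L₁) and g ∈ N(N₂,L₂). Then for any real numbers p, q, the composed function x ↦ f(p·g(x) + q) is realized by a ReLU network in N(N₁ + N₂ − 1, L₁ + L₂ − 1). -/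
open MeasureTheory Set ENNReal

noncomputable section

/-- Coordinatewise ReLU activation. -/
def relu {m : ℕ} (x : Fin m → ℝ) : Fin m → ℝ := fun i => max 0 (x i)

/-- `M` is an affine map `ℝ^m → ℝ^k`. -/
def IsAffineMap {m k : ℕ} (M : (Fin m → ℝ) → (Fin k → ℝ)) : Prop :=
  ∃ (A : Matrix (Fin k) (Fin m) ℝ) (b : Fin k → ℝ), ∀ x, M x = A.mulVec x + b

/-- `RealizedBy L m0 mL φ N` : the map `φ : ℝ^{m0} → ℝ^{mL}` is a fully connected feedforward
ReLU network of depth `L` and size `N`, i.e. `φ = M_L ∘ ReLU ∘ M_{L-1} ∘ ⋯ ∘ ReLU ∘ M_1` for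
affine maps `M_i : ℝ^{m_{i-1}} → ℝ^{m_i}` with `m_1, …, m_{L-1} > 0` and `N = m_1 + ⋯ + m_L`. -/
def RealizedBy : (L : ℕ) → (m0 mL : ℕ) → ((Fin m0 → ℝ) → (Fin mL → ℝ)) → ℕ → Prop
  | 0, _, _, _, _ => False
  | 1, _, mL, φ, N => IsAffineMap φ ∧ N = mL
  | (L + 2), m0, mL, φ, N =>
      ∃ (m1 : ℕ) (M1 : (Fin m0 → ℝ) → (Fin m1 → ℝ))
        (ψ : (Fin m1 → ℝ) → (Fin mL → ℝ)) (N' : ℕ),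
        0 < m1 ∧ IsAffineMap M1 ∧ RealizedBy (L + 1) m1 mL ψ N' ∧
        N = m1 + N' ∧ ∀ x, φ x = ψ (relu (M1 x))

/-- `f : ℝ → ℝ` is realized by a ReLU network in `N(N, L)`. -/
def Realizes (f : ℝ → ℝ) (N L : ℕ) : Prop :=
  ∃ φ : (Fin 1 → ℝ) → (Fin 1 → ℝ), RealizedBy L 1 1 φ N ∧
    ∀ x : ℝ, φ (fun _ => x) 0 = f x

lemma affine_comp {m k l : ℕ} {M : (Fin m → ℝ) → (Fin k → ℝ)}
    {M' : (Fin k → ℝ) → (Fin l → ℝ)} (hM : IsAffineMap M) (hM' : IsAffineMap M') :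
    IsAffineMap (fun x => M' (M x)) := by
  obtain ⟨A, b, hA⟩ := hM
  obtain ⟨A', b', hA'⟩ := hM'
  refine ⟨A' * A, A'.mulVec b + b', fun x => ?_⟩
  simp [hA, hA', Matrix.mulVec_add, ← Matrix.mulVec_mulVec, add_assoc]

lemma realizedBy_precomp : ∀ (L m1 mL : ℕ) (φ : (Fin m1 → ℝ) → (Fin mL → ℝ)) (N : ℕ),
    RealizedBy L m1 mL φ N → ∀ (m0 : ℕ) (A : (Fin m0 → ℝ) → (Fin m1 → ℝ)),
    IsAffineMap A → RealizedBy L m0 mL (fun x => φ (A x)) N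
  | 0, _, _, _, _, h => h.elim
  | 1, _, _, _, _, h => fun _ A hA => ⟨affine_comp hA h.1, h.2⟩
  | (L + 2), m1, mL, φ, N, h => by
    intro m0 A hA
    obtain ⟨k, M1, ψ, N', hk, hM1, hψ, hN, hval⟩ := h
    exact ⟨k, fun x => M1 (A x), ψ, N', hk, affine_comp hA hM1, hψ, hN,
      fun x => hval (A x)⟩

lemma realizedBy_size_ge : ∀ (L m0 mL : ℕ) (φ : (Fin m0 → ℝ) → (Fin mL → ℝ)) (N : ℕ),
    RealizedBy L m0 mL φ N → mL ≤ N
  | 0, _, _, _, _, h => h.elim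
  | 1, _, _, _, _, h => le_of_eq h.2.symm
  | (L + 2), m0, mL, φ, N, h => by
    obtain ⟨k, M1, ψ, N', hk, hM1, hψ, hN, hval⟩ := h
    have := realizedBy_size_ge (L + 1) k mL ψ N' hψ
    omega

lemma main_aux : ∀ (l2 m0 : ℕ) (φg : (Fin m0 → ℝ) → (Fin 1 → ℝ)) (N2 : ℕ),
    RealizedBy (l2 + 1) m0 1 φg N2 →
    ∀ (l1 mL : ℕ) (φf : (Fin 1 → ℝ) → (Fin mL → ℝ)) (N1 : ℕ)
      (A : (Fin 1 → ℝ) → (Fin 1 → ℝ)), IsAffineMap A →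
    RealizedBy (l1 + 1) 1 mL φf N1 →
    RealizedBy (l1 + l2 + 1) m0 mL (fun x => φf (A (φg x))) (N1 + N2 - 1)
  | 0, m0, φg, N2, hg => by
    intro l1 mL φf N1 A hA hf
    have hN2 : N2 = 1 := hg.2
    have : N1 + N2 - 1 = N1 := by omega
    rw [this]
    exact realizedBy_precomp (l1 + 1) 1 mL φf N1 hf m0 (fun x => A (φg x))
      (affine_comp hg.1 hA)
  | (l + 1), m0, φg, N2, hg => by
    intro l1 mL φf N1 A hA hf
    obtain ⟨k, M1, ψ, N', hk, hM1, hψ, hN, hval⟩ := hg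
    have ih := main_aux l k ψ N' hψ l1 mL φf N1 A hA hf
    have hN' : 1 ≤ N' := realizedBy_size_ge (l + 1) k 1 ψ N' hψ
    refine ⟨k, M1, fun y => φf (A (ψ y)), N1 + N' - 1, hk, hM1, ih, by omega, ?_⟩
    intro x
    show φf (A (φg x)) = φf (A (ψ (relu (M1 x))))
    rw [hval]

theorem compose_lemma (f g : ℝ → ℝ) (N1 L1 N2 L2 : ℕ)
    (h1 : Realizes f N1 L1) (h2 : Realizes g N2 L2) (p q : ℝ) :
    Realizes (fun x => f (p * g x + q)) (N1 + N2 - 1) (L1 + L2 - 1) := by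
  obtain ⟨φf, hf, hfval⟩ := h1
  obtain ⟨φg, hg, hgval⟩ := h2
  match L1, hf with
  | 0, hf => exact hf.elim
  | (l1 + 1), hf =>
  match L2, hg with
  | 0, hg => exact hg.elim
  | (l2 + 1), hg =>
  set A : (Fin 1 → ℝ) → (Fin 1 → ℝ) := fun y _ => p * y 0 + q with hAdef
  have hA : IsAffineMap A := by
    refine ⟨Matrix.of fun _ _ => p, fun _ => q, fun y => ?_⟩
    funext i
    simp [hAdef, Matrix.mulVec, dotProduct, Fin.sum_univ_one]
  have key := main_aux l2 1 φg N2 hg l1 1 φf N1 A hA hf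
  have hL : l1 + 1 + (l2 + 1) - 1 = l1 + l2 + 1 := by omega
  rw [hL]
  refine ⟨fun x => φf (A (φg x)), key, fun x => ?_⟩
  have : A (φg fun _ => x) = fun _ => p * g x + q := by
    funext i
    simp [hAdef, hgval]
  show φf (A (φg fun _ => x)) 0 = f (p * g x + q)
  rw [this, hfval]
end
end
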